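/- Let (Ω, ℱ, P) be a probability space, let G and V be real random variables such that G has Gaussian law with mean m ∈ ℝ and variance v > 0, G and V are independent, and let D ∈ ℝ be such that P(V < D) > 0. Let c > 0, R > 0 and X ≥ 0 be real constants, and set w := log(1/c + R·X) − m. Then the conditional expectation of (1 − c·(e^G − R·X))₊ given the event {V < D} equals (1 + c·R·X)·Φ(w/√v) − c·e^{m + v/2}·Φ(w/√v − √v); that is, E[(1 − c·(e^G − R·X))₊ · 1_{{V < D}}] / P(V < D) = (1 + c·R·X)·Φ(w/√v) − c·e^{m + v/2}·Φ(w/√v − √v). -/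

import Mathlib

open MeasureTheory ProbabilityTheory

/-- The standard normal density `φ(x) = (2π)^{-1/2} e^{-x²/2}`. -/
noncomputable def stdGaussianPDF (x : ℝ) : ℝ :=
  (Real.sqrt (2 * Real.pi))⁻¹ * Real.exp (-x ^ 2 / 2)

/-- The standard normal cumulative distribution function `Φ`. -/
noncomputable def stdGaussianCDF (x : ℝ) : ℝ :=
  ∫ z in Set.Iio x, stdGaussianPDF z

/-!
By independence, the integral over `{V < D}` factors as `E[f(G)] · P(V < D)`, so the conditional
expectation is the Gaussian expectation of the payoff `f x = (1 - c (eˣ - R X))₊ = c (K - eˣ)₊`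
with `K = 1/c + R X`. This is a put payoff, whose expectation is given by the Black–Scholes
formula: on `{x ≤ log K}` the `N(m, v)` density times `eˣ` is `e^{m + v/2}` times the
`N(m + v, v)` density, and the mass of a half-line under a Gaussian law is `Φ` of the
standardized endpoint.
-/

open Real Set
open scoped NNReal

lemma stdGaussianPDF_eq_gaussianPDFReal : stdGaussianPDF = gaussianPDFReal 0 1 := by
  funext x; simp [stdGaussianPDF, gaussianPDFReal]

lemma cdf_gaussianReal_eq_setIntegral (μ : ℝ) {v : ℝ≥0} (hv : v ≠ 0) (x : ℝ) :
    cdf (gaussianReal μ v) x = ∫ y in Iic x, gaussianPDFReal μ v y := by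
  rw [cdf_eq_real, measureReal_def, gaussianReal_apply_eq_integral μ hv,
    ENNReal.toReal_ofReal (integral_nonneg (gaussianPDFReal_nonneg μ v))]

lemma stdGaussianCDF_eq_cdf : stdGaussianCDF = cdf (gaussianReal 0 1) := by
  funext x
  rw [cdf_gaussianReal_eq_setIntegral 0 one_ne_zero, stdGaussianCDF,
    stdGaussianPDF_eq_gaussianPDFReal, setIntegral_congr_set Iio_ae_eq_Iic]

lemma gaussianReal_zero_one_map_affine (μ : ℝ) (v : ℝ≥0) :
    (gaussianReal 0 1).map (fun z ↦ √v * z + μ) = gaussianReal μ v := by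
  have : (fun z : ℝ ↦ √v * z + μ) = (· + μ) ∘ (√v * ·) := rfl
  rw [this, ← Measure.map_map (measurable_add_const μ) (measurable_const_mul _),
    gaussianReal_map_const_mul, gaussianReal_map_add_const]
  congr 1
  · ring
  · ext; simp

lemma cdf_gaussianReal (μ : ℝ) {v : ℝ≥0} (hv : v ≠ 0) (x : ℝ) :
    cdf (gaussianReal μ v) x = stdGaussianCDF ((x - μ) / √v) := by
  have hsv : 0 < √(v : ℝ) := by positivity
  have hpre : (fun z ↦ √v * z + μ) ⁻¹' Iic x = Iic ((x - μ) / √v) := by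
    ext z; simp [le_div_iff₀ hsv, mul_comm, le_sub_iff_add_le]
  rw [stdGaussianCDF_eq_cdf, cdf_eq_real, cdf_eq_real, ← gaussianReal_zero_one_map_affine,
    map_measureReal_apply (by fun_prop) measurableSet_Iic, hpre]

lemma setIntegral_Iic_gaussianPDFReal (μ : ℝ) {v : ℝ≥0} (hv : v ≠ 0) (x : ℝ) :
    ∫ y in Iic x, gaussianPDFReal μ v y = stdGaussianCDF ((x - μ) / √v) := by
  rw [← cdf_gaussianReal_eq_setIntegral μ hv, cdf_gaussianReal μ hv]

lemma gaussianPDFReal_mul_exp (μ : ℝ) (v : ℝ≥0) (x : ℝ) :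
    gaussianPDFReal μ v x * exp x = exp (μ + v / 2) * gaussianPDFReal (μ + v) v x := by
  rcases eq_or_ne v 0 with rfl | hv
  · simp [gaussianPDFReal_zero_var]
  simp only [gaussianPDFReal]
  rw [mul_assoc, ← exp_add, mul_left_comm, ← exp_add]
  congr 2
  field_simp
  ring

lemma max_sub_exp_eq_indicator {K : ℝ} (hK : 0 < K) (x : ℝ) :
    max (K - exp x) 0 = (Iic (log K)).indicator (fun y ↦ K - exp y) x := by
  by_cases hx : x ≤ log K
  · have : exp x ≤ K := (exp_le_exp.2 hx).trans_eq (exp_log hK)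
    simp [hx, this]
  · have : K < exp x := (exp_log hK).symm.trans_lt (exp_lt_exp.2 (not_le.1 hx))
    simp [hx, this.le]

lemma integral_max_sub_exp_gaussianReal (μ : ℝ) {v : ℝ≥0} (hv : v ≠ 0) {K : ℝ} (hK : 0 < K) :
    ∫ x, max (K - exp x) 0 ∂gaussianReal μ v
      = K * stdGaussianCDF ((log K - μ) / √v)
        - exp (μ + v / 2) * stdGaussianCDF ((log K - μ) / √v - √v) := by
  have hpdf : ∀ x, gaussianPDFReal μ v x * max (K - exp x) 0
      = (Iic (log K)).indicator
          (fun y ↦ K * gaussianPDFReal μ v y - exp (μ + v / 2) * gaussianPDFReal (μ + v) v y) x := by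
    intro x
    rw [max_sub_exp_eq_indicator hK, ← indicator_mul_right]
    congr 1
    funext y
    linear_combination -gaussianPDFReal_mul_exp μ v y
  have hshift : (log K - (μ + v)) / √v = (log K - μ) / √v - √v := by
    have hsv : 0 < √(v : ℝ) := by positivity
    field_simp
    rw [sq_sqrt v.coe_nonneg]
    ring
  simp_rw [integral_gaussianReal_eq_integral_smul hv, smul_eq_mul, hpdf,
    integral_indicator measurableSet_Iic]
  rw [integral_sub ((integrable_gaussianPDFReal _ _).const_mul _).integrableOn
      ((integrable_gaussianPDFReal _ _).const_mul _).integrableOn,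
    integral_const_mul, integral_const_mul, setIntegral_Iic_gaussianPDFReal μ hv,
    setIntegral_Iic_gaussianPDFReal _ hv, hshift]

lemma ProbabilityTheory.IndepFun.setIntegral_preimage_eq_integral_mul_measureReal {Ω α β : Type*}
    [MeasurableSpace Ω] [MeasurableSpace α] [MeasurableSpace β] {P : Measure Ω}
    {G : Ω → α} {V : Ω → β} (hindep : IndepFun G V P) (hG : AEMeasurable G P)
    (hV : Measurable V) {f : α → ℝ} (hf : Measurable f) {s : Set β} (hs : MeasurableSet s) :
    ∫ ω in V ⁻¹' s, f (G ω) ∂P = (∫ ω, f (G ω) ∂P) * P.real (V ⁻¹' s) := by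
  have hind : IndepFun (f ∘ G) (s.indicator (1 : β → ℝ) ∘ V) P :=
    hindep.comp hf (measurable_one.indicator hs)
  calc ∫ ω in V ⁻¹' s, f (G ω) ∂P = ∫ ω, f (G ω) * s.indicator 1 (V ω) ∂P := by
        rw [← integral_indicator (hV hs)]
        congr 1
        funext ω
        by_cases hω : V ω ∈ s <;> simp [hω]
    _ = (∫ ω, f (G ω) ∂P) * ∫ ω, s.indicator 1 (V ω) ∂P :=
        hind.integral_fun_mul_eq_mul_integral (hf.comp_aemeasurable hG).aestronglyMeasurable
          ((measurable_one.indicator hs).comp hV).aestronglyMeasurable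
    _ = (∫ ω, f (G ω) ∂P) * P.real (V ⁻¹' s) := by
        rw [← integral_indicator_one (hV hs)]
        rfl

/-- If `G` is Gaussian with mean `m` and variance `v`, independent of `V`, `P(V < D) > 0`,
`c, R > 0` and `X ≥ 0`, then with `w = log(1/c + R X) - m`,
`E[(1 - c (e^G - R X))₊ | V < D]
  = (1 + c R X) Φ(w/√v) - c e^{m + v/2} Φ(w/√v - √v)`. -/
theorem condExp_LGD_real_estate {Ω : Type*} [MeasurableSpace Ω]
    (P : Measure Ω) [IsProbabilityMeasure P]
    (G V : Ω → ℝ) (hGmeas : Measurable G) (hVmeas : Measurable V)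
    (m v : ℝ) (hv : 0 < v)
    (hlaw : P.map G = gaussianReal m ⟨v, hv.le⟩)
    (hindep : IndepFun G V P)
    (D : ℝ) (hD : 0 < (P {ω | V ω < D}).toReal)
    (c R X : ℝ) (hc : 0 < c) (hR : 0 < R) (hX : 0 ≤ X) :
    (∫ ω in {ω | V ω < D}, max (1 - c * (Real.exp (G ω) - R * X)) 0 ∂P)
        / (P {ω | V ω < D}).toReal
      = (1 + c * R * X) * stdGaussianCDF ((Real.log (1 / c + R * X) - m) / Real.sqrt v)
        - c * Real.exp (m + v / 2)
          * stdGaussianCDF ((Real.log (1 / c + R * X) - m) / Real.sqrt v - Real.sqrt v) := by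
  have hK : 0 < 1 / c + R * X := by positivity
  have hpayoff : ∀ x, max (1 - c * (exp x - R * X)) 0 = c * max (1 / c + R * X - exp x) 0 := by
    intro x
    rw [mul_max_of_nonneg _ _ hc.le, mul_zero]
    congr 1
    field_simp
    ring
  have hfactor := hindep.setIntegral_preimage_eq_integral_mul_measureReal
    hGmeas.aemeasurable hVmeas (f := fun x ↦ max (1 - c * (exp x - R * X)) 0) (by fun_prop)
    (measurableSet_Iio (a := D))
  have hlaw_integral : ∫ ω, max (1 - c * (exp (G ω) - R * X)) 0 ∂P
      = ∫ x, max (1 - c * (exp x - R * X)) 0 ∂gaussianReal m ⟨v, hv.le⟩ := by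
    rw [← hlaw, integral_map hGmeas.aemeasurable (by fun_prop)]
  have hput := integral_max_sub_exp_gaussianReal m (v := ⟨v, hv.le⟩)
    (NNReal.coe_ne_zero.1 hv.ne') hK
  have hcK : c * (1 / c + R * X) = 1 + c * R * X := by field_simp
  rw [show {ω | V ω < D} = V ⁻¹' Iio D from rfl] at hD ⊢
  rw [hfactor, measureReal_def, mul_div_cancel_right₀ _ hD.ne', hlaw_integral]
  simp_rw [hpayoff]
  rw [integral_const_mul, hput, mul_sub, ← mul_assoc, hcK, ← mul_assoc]
  -- `((⟨v, hv.le⟩ : ℝ≥0) : ℝ)` is `v` only up to unfolding, so `rw` cannot close the goal.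
  rfl
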